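/- arXiv:0906.5053 — 2 statements merged into one kernel-verified Lean document; each statement's English description precedes it below -/
import Mathlib

section
/- Let G be a 4-connected finite simple graph with minimum degree δ, let C be a longest cycle in G which is a D₃-cycle, and let x₁x₂ be an edge of G∖C. With R = N_C(x₁) ∪ N_C(x₂), M = N_C(x₁) ∩ N_C(x₂), and Y = R ∪ R⁺ ∪ M⁺², one has |Y| ≥ 2·d(x₁) + 2·d(x₂) − |M| − 4 ≥ 4δ − |M| − 4. -/
namespace SimpleGraph

variable {V : Type*}

/-- `S` is a cut-set of `G`: deleting `S` disconnects the graph. -/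
def IsCutSet [Fintype V] (G : SimpleGraph V) (S : Finset V) : Prop :=
  ¬ (G.induce ((↑S : Set V)ᶜ)).Connected

/-- The vertex connectivity of `G`: the largest `k` such that `G` is `k`-connected,
i.e. `G` has more than `k` vertices and removing fewer than `k` vertices
always leaves a connected graph. -/
noncomputable def vertexConnectivity [Fintype V] (G : SimpleGraph V) : ℕ :=
  sSup {k | k < Fintype.card V ∧
    ∀ S : Finset V, S.card < k → (G.induce ((↑S : Set V)ᶜ)).Connected}

/-- `S` is a minimum cut-set of `G`: a cut-set whose cardinality equals
the connectivity of `G`. -/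
def IsMinCutSet [Fintype V] (G : SimpleGraph V) (S : Finset V) : Prop :=
  G.IsCutSet S ∧ S.card = G.vertexConnectivity

/-- The circumference of `G`: the length of a longest cycle (`0` if there is none). -/
noncomputable def circumference (G : SimpleGraph V) : ℕ :=
  sSup {n | ∃ (v : V) (C : G.Walk v v), C.IsCycle ∧ C.length = n}

/-- `C` is a longest cycle in `G`. -/
def IsLongestCycle {G : SimpleGraph V} {v : V} (C : G.Walk v v) : Prop :=
  C.IsCycle ∧ ∀ (w : V) (D : G.Walk w w), D.IsCycle → D.length ≤ C.length

/-- `C` is a dominating cycle: every edge of `G` has an endpoint on `C`. -/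
def IsDominatingCycle {G : SimpleGraph V} {v : V} (C : G.Walk v v) : Prop :=
  C.IsCycle ∧ ∀ a b : V, G.Adj a b → a ∈ C.support ∨ b ∈ C.support

/-- `C` is a `D₃`-cycle: every path of length at least 2 in `G` has a vertex
in common with `C`. -/
def IsD3Cycle {G : SimpleGraph V} {v : V} (C : G.Walk v v) : Prop :=
  C.IsCycle ∧ ∀ (a b : V) (P : G.Walk a b), P.IsPath → 2 ≤ P.length →
    ∃ z, z ∈ P.support ∧ z ∈ C.support

/-- The successor of a vertex `x` on the (oriented) cycle `C`
(and `x` itself if `x` does not lie on `C`). -/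
noncomputable def cycleSucc [DecidableEq V] {G : SimpleGraph V} {v : V}
    (C : G.Walk v v) (x : V) : V :=
  if h : x ∈ C.support.tail then C.support.tail.next x h else x

/-- The neighborhood of `x` on the cycle `C`, as a finset: `N(x) ∩ V(C)`. -/
def cycleNbhd [Fintype V] [DecidableEq V] {G : SimpleGraph V} [DecidableRel G.Adj]
    {v : V} (C : G.Walk v v) (x : V) : Finset V :=
  G.neighborFinset x ∩ C.support.toFinset

end SimpleGraph

/-!
By the D₃ property the only neighbour of `xᵢ` off `C` is the other `xⱼ`, so
`d(xᵢ) ≤ |N_C(xᵢ)| + 1`. Since `C` is a longest cycle, no path of length `> k` from `u ∈ C` to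
`u⁺ᵏ` with inner vertices off `C` exists: it would replace the arc `u … u⁺ᵏ` of `C`. Applied to the
paths `u xᵢ u⁺`, `u xᵢ xⱼ u⁺` and `u xᵢ xⱼ u⁺²`, this makes `R`, `R⁺` and `M⁺²` pairwise
disjoint, and the successor map is injective on `C`, so
`|Y| + |M| = 2|R| + 2|M| = 2|N_C(x₁)| + 2|N_C(x₂)| ≥ 2d(x₁) + 2d(x₂) - 4`.
-/
namespace SimpleGraph

variable {V : Type*} {G : SimpleGraph V} {u v : V}

lemma Walk.IsPath.start_notMem_support_tail {w : V} {P : G.Walk u w} (hP : P.IsPath) :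
    u ∉ P.support.tail := by
  have h := hP.support_nodup
  rw [← P.cons_tail_support, List.nodup_cons] at h
  exact h.1

lemma Walk.IsCycle.mem_support_tail {C : G.Walk v v} (hC : C.IsCycle) {x : V}
    (hx : x ∈ C.support) : x ∈ C.support.tail := by
  rcases C.mem_support_iff.mp hx with rfl | h
  · exact Walk.end_mem_tail_support hC.not_nil
  · exact h

-- `P` followed by the arc of `C` from its `k`-th vertex back to `u` is a cycle.
lemma IsLongestCycle.length_le_of_isPath {C : G.Walk u u} (hC : IsLongestCycle C) {k : ℕ}
    (hk : 0 < k) {P : G.Walk u (C.getVert k)} (hP : P.IsPath)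
    (hPC : ∀ x ∈ P.support, x ∈ C.support → x = u ∨ x = C.getVert k) : P.length ≤ k := by
  by_contra! hlong
  have hD : (C.drop k).IsPath := hC.1.isPath_drop hk
  have hdisj : P.support.tail.Disjoint (C.drop k).support.tail := by
    intro x hxP hxD
    have hxC : x ∈ C.support := by
      rw [C.drop_support_eq_support_drop_min] at hxD
      exact List.mem_of_mem_drop (List.mem_of_mem_tail hxD)
    rcases hPC x (List.mem_of_mem_tail hxP) hxC with rfl | rfl
    · exact hP.start_notMem_support_tail hxP
    · exact hD.start_notMem_support_tail hxD
  have hcycle := hC.2 _ _ (hP.isCycle_append hD hdisj (Or.inl (by omega)))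
  rw [Walk.length_append, Walk.drop_length] at hcycle
  omega

lemma IsD3Cycle.eq_of_adj_of_notMem {C : G.Walk v v} (hD3 : IsD3Cycle C) {x y w : V}
    (hxy : G.Adj x y) (hxw : G.Adj x w) (hx : x ∉ C.support) (hy : y ∉ C.support)
    (hw : w ∉ C.support) : w = y := by
  by_contra hwy
  have hP : (Walk.cons hxw.symm (Walk.cons hxy .nil)).IsPath := by
    simp [Walk.cons_isPath_iff, hxw.ne', hxy.ne, hwy]
  obtain ⟨z, hzP, hzC⟩ := hD3.2 _ _ _ hP (by simp)
  simp only [Walk.support_cons, Walk.support_nil, List.mem_cons, List.not_mem_nil,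
    or_false] at hzP
  rcases hzP with rfl | rfl | rfl <;> contradiction

lemma mem_cycleNbhd [Fintype V] [DecidableEq V] [DecidableRel G.Adj] {C : G.Walk v v}
    {x w : V} : w ∈ cycleNbhd C x ↔ G.Adj x w ∧ w ∈ C.support := by
  simp [cycleNbhd]

lemma IsD3Cycle.degree_le_card_cycleNbhd_add_one [Fintype V] [DecidableEq V]
    [DecidableRel G.Adj] {C : G.Walk v v} (hD3 : IsD3Cycle C) {x y : V} (hxy : G.Adj x y)
    (hx : x ∉ C.support) (hy : y ∉ C.support) :
    G.degree x ≤ (cycleNbhd C x).card + 1 := by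
  have hsub : G.neighborFinset x ⊆ insert y (cycleNbhd C x) := by
    intro w hw
    rw [mem_neighborFinset] at hw
    by_cases hwC : w ∈ C.support
    · exact Finset.mem_insert_of_mem (mem_cycleNbhd.mpr ⟨hw, hwC⟩)
    · rw [hD3.eq_of_adj_of_notMem hxy hw hx hy hwC]
      exact Finset.mem_insert_self _ _
  exact (Finset.card_le_card hsub).trans (Finset.card_insert_le _ _)

variable [DecidableEq V]

lemma cycleSucc_rotate {C : G.Walk v v} (hC : C.IsCycle) (hu : u ∈ C.support) :
    cycleSucc (C.rotate u hu) = cycleSucc C := by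
  funext x
  have hrot := C.support_rotate u hu
  unfold cycleSucc
  by_cases hx : x ∈ C.support.tail
  · rw [dif_pos (hrot.mem_iff.mpr hx), dif_pos hx]
    exact List.isRotated_next_eq hrot (hC.rotate hu).support_nodup _
  · rw [dif_neg (mt hrot.mem_iff.mp hx), dif_neg hx]

lemma cycleSucc_getVert {C : G.Walk v v} (hC : C.IsCycle) {i : ℕ} (hi : i < C.length) :
    cycleSucc C (C.getVert i) = C.getVert (i + 1) := by
  have hlen : C.support.tail.length = C.length := by simp
  have hget : ∀ j (hj : j < C.length), C.support.tail[j] = C.getVert (j + 1) := by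
    intro j hj
    rw [List.getElem_tail, C.getVert_eq_support_getElem (by omega)]
  -- `C.getVert 0 = C.getVert C.length` is the last entry of `C.support.tail`
  obtain ⟨j, hj, hji, hsucc⟩ : ∃ j, ∃ hj : j < C.length, C.support.tail[j] = C.getVert i ∧
      (j + 1) % C.length = i := by
    rcases Nat.eq_zero_or_pos i with rfl | hpos
    · refine ⟨C.length - 1, by omega, ?_, ?_⟩
      · rw [hget _ (by omega), Nat.sub_add_cancel (by omega), C.getVert_length, C.getVert_zero]
      · rw [Nat.sub_add_cancel (by omega), Nat.mod_self]
    · refine ⟨i - 1, by omega, ?_, ?_⟩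
      · rw [hget _ (by omega), Nat.sub_add_cancel hpos]
      · rw [Nat.sub_add_cancel hpos, Nat.mod_eq_of_lt hi]
  rw [← hji, cycleSucc, dif_pos (List.getElem_mem _), List.next_getElem _ hC.support_nodup]
  simp only [hlen, hsucc]
  exact hget i hi

lemma iterate_cycleSucc {C : G.Walk v v} (hC : C.IsCycle) (hu : u ∈ C.support) {k : ℕ}
    (hk : k ≤ C.length) : (cycleSucc C)^[k] u = (C.rotate u hu).getVert k := by
  induction k with
  | zero => simp
  | succ k ih =>
    rw [Function.iterate_succ_apply', ih (by omega), ← cycleSucc_rotate hC hu,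
      cycleSucc_getVert (hC.rotate hu) (by simp; omega)]

lemma iterate_cycleSucc_ne {C : G.Walk v v} (hC : C.IsCycle) (hu : u ∈ C.support) {k : ℕ}
    (hk : 0 < k) (hkC : k < C.length) : (cycleSucc C)^[k] u ≠ u := by
  rw [iterate_cycleSucc hC hu hkC.le]
  conv_rhs => rw [← (C.rotate u hu).getVert_length]
  intro h
  have := (hC.rotate hu).getVert_injOn (by simp; omega) (by simp; omega) h
  simp at this
  omega

lemma iterate_cycleSucc_mem_support {C : G.Walk v v} (hC : C.IsCycle) (hu : u ∈ C.support)
    {k : ℕ} (hk : k ≤ C.length) : (cycleSucc C)^[k] u ∈ C.support := by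
  rw [iterate_cycleSucc hC hu hk, ← C.mem_support_rotate_iff u hu]
  exact Walk.getVert_mem_support _ _

lemma cycleSucc_injOn {C : G.Walk v v} (hC : C.IsCycle) :
    Set.InjOn (cycleSucc C) {x | x ∈ C.support} := by
  intro x hx y hy hxy
  have hx' := hC.mem_support_tail hx
  have hy' := hC.mem_support_tail hy
  rw [cycleSucc, dif_pos hx', cycleSucc, dif_pos hy'] at hxy
  rw [← List.prev_next _ hC.support_nodup x hx', ← List.prev_next _ hC.support_nodup y hy']
  congr 1

lemma cycleSucc_mapsTo {C : G.Walk v v} (hC : C.IsCycle) :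
    Set.MapsTo (cycleSucc C) {x | x ∈ C.support} {x | x ∈ C.support} :=
  fun _ hx ↦ iterate_cycleSucc_mem_support hC hx (k := 1) (by have := hC.three_le_length; omega)

lemma IsLongestCycle.rotate {C : G.Walk v v} (hC : IsLongestCycle C) (hu : u ∈ C.support) :
    IsLongestCycle (C.rotate u hu) :=
  ⟨hC.1.rotate hu, by simpa using hC.2⟩

lemma IsLongestCycle.length_le_of_isPath_iterate {C : G.Walk v v} (hC : IsLongestCycle C)
    (hu : u ∈ C.support) {k : ℕ} (hk : 0 < k) (hkC : k ≤ C.length) {w : V}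
    (hw : (cycleSucc C)^[k] u = w) {P : G.Walk u w} (hP : P.IsPath)
    (hPC : ∀ x ∈ P.support, x ∈ C.support → x = u ∨ x = w) : P.length ≤ k := by
  rw [iterate_cycleSucc hC.1 hu hkC] at hw
  subst hw
  exact (hC.rotate hu).length_le_of_isPath hk hP (by simpa using hPC)

lemma IsLongestCycle.not_adj_cycleSucc {C : G.Walk v v} (hC : IsLongestCycle C)
    (hu : u ∈ C.support) {a : V} (ha : a ∉ C.support) (hua : G.Adj u a) :
    ¬ G.Adj a (cycleSucc C u) := by
  intro haw
  have h3 := hC.1.three_le_length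
  have hwu : cycleSucc C u ≠ u := iterate_cycleSucc_ne hC.1 hu (k := 1) one_pos (by omega)
  have hP : (Walk.cons hua (Walk.cons haw .nil)).IsPath := by
    simp [Walk.cons_isPath_iff, hua.ne, hwu.symm, haw.ne]
  have hPC : ∀ x ∈ (Walk.cons hua (Walk.cons haw .nil)).support, x ∈ C.support →
      x = u ∨ x = cycleSucc C u := by
    simp [ha]
  have := hC.length_le_of_isPath_iterate hu (k := 1) one_pos (by omega) (w := cycleSucc C u) rfl
    hP hPC
  simp only [Walk.length_cons, Walk.length_nil] at this
  omega

lemma IsLongestCycle.not_adj_iterate_cycleSucc {C : G.Walk v v} (hC : IsLongestCycle C)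
    (hu : u ∈ C.support) {a b : V} (ha : a ∉ C.support) (hb : b ∉ C.support)
    (hua : G.Adj u a) (hab : G.Adj a b) {k : ℕ} (hk : 0 < k) (hk3 : k < 3) :
    ¬ G.Adj b ((cycleSucc C)^[k] u) := by
  intro hbw
  have h3 := hC.1.three_le_length
  have hwC := iterate_cycleSucc_mem_support hC.1 hu (k := k) (by omega)
  have hwu := iterate_cycleSucc_ne hC.1 hu hk (by omega)
  have haw : a ≠ (cycleSucc C)^[k] u := fun h ↦ ha (h ▸ hwC)
  have hub : u ≠ b := fun h ↦ hb (h ▸ hu)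
  have hP : (Walk.cons hua (Walk.cons hab (Walk.cons hbw .nil))).IsPath := by
    simp [Walk.cons_isPath_iff, hua.ne, hwu.symm, hab.ne, hbw.ne, haw, hub]
  have hPC : ∀ x ∈ (Walk.cons hua (Walk.cons hab (Walk.cons hbw .nil))).support,
      x ∈ C.support → x = u ∨ x = (cycleSucc C)^[k] u := by
    simp [ha, hb]
  have := hC.length_le_of_isPath_iterate hu hk (by omega) rfl hP hPC
  simp only [Walk.length_cons, Walk.length_nil] at this
  omega

section Neighbourhoods

variable [Fintype V] [DecidableRel G.Adj] {C : G.Walk v v} {x₁ x₂ : V}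

lemma IsLongestCycle.disjoint_image_cycleSucc (hC : IsLongestCycle C) (hadj : G.Adj x₁ x₂)
    (hx₁ : x₁ ∉ C.support) (hx₂ : x₂ ∉ C.support) :
    Disjoint (cycleNbhd C x₁ ∪ cycleNbhd C x₂)
      ((cycleNbhd C x₁ ∪ cycleNbhd C x₂).image (cycleSucc C)) := by
  rw [Finset.disjoint_left]
  rintro _ hw hw'
  obtain ⟨u, hu, rfl⟩ := Finset.mem_image.mp hw'
  simp only [Finset.mem_union, mem_cycleNbhd] at hu hw
  rcases hu with ⟨hu₁, huC⟩ | ⟨hu₂, huC⟩ <;> rcases hw with ⟨hw₁, -⟩ | ⟨hw₂, -⟩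
  · exact hC.not_adj_cycleSucc huC hx₁ hu₁.symm hw₁
  · exact hC.not_adj_iterate_cycleSucc huC hx₁ hx₂ hu₁.symm hadj (k := 1) one_pos
      (by norm_num) hw₂
  · exact hC.not_adj_iterate_cycleSucc huC hx₂ hx₁ hu₂.symm hadj.symm (k := 1) one_pos
      (by norm_num) hw₁
  · exact hC.not_adj_cycleSucc huC hx₂ hu₂.symm hw₂

lemma IsLongestCycle.disjoint_image_cycleSucc_comp (hC : IsLongestCycle C)
    (hadj : G.Adj x₁ x₂) (hx₁ : x₁ ∉ C.support) (hx₂ : x₂ ∉ C.support) :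
    Disjoint (cycleNbhd C x₁ ∪ cycleNbhd C x₂)
      ((cycleNbhd C x₁ ∩ cycleNbhd C x₂).image (cycleSucc C ∘ cycleSucc C)) := by
  rw [Finset.disjoint_left]
  rintro _ hw hw'
  obtain ⟨u, hu, rfl⟩ := Finset.mem_image.mp hw'
  simp only [Finset.mem_union, Finset.mem_inter, mem_cycleNbhd] at hu hw
  obtain ⟨⟨hu₁, huC⟩, hu₂, -⟩ := hu
  rcases hw with ⟨hw₁, -⟩ | ⟨hw₂, -⟩
  · exact hC.not_adj_iterate_cycleSucc huC hx₂ hx₁ hu₂.symm hadj.symm (k := 2) two_pos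
      (by norm_num) hw₁
  · exact hC.not_adj_iterate_cycleSucc huC hx₁ hx₂ hu₁.symm hadj (k := 2) two_pos
      (by norm_num) hw₂

end Neighbourhoods

end SimpleGraph

theorem Finset.card_union_image_union_image_comp {α : Type*} [DecidableEq α] {f : α → α}
    {S : Set α} {R M : Finset α} (hf : S.InjOn f) (hfS : S.MapsTo f S) (hRS : ↑R ⊆ S)
    (hMR : M ⊆ R) (hR : Disjoint R (R.image f)) (hM : Disjoint R (M.image (f ∘ f))) :
    (R ∪ R.image f ∪ M.image (f ∘ f)).card = 2 * R.card + M.card := by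
  have hMS : ↑M ⊆ S := (Finset.coe_subset.mpr hMR).trans hRS
  have hfM : Disjoint R (M.image f) := hR.mono_right (Finset.image_subset_image hMR)
  have hfRfM : Disjoint (R.image f) (M.image (f ∘ f)) := by
    rw [← Finset.image_image, ← Finset.disjoint_coe, Finset.coe_image, Finset.coe_image]
    refine (Finset.disjoint_coe.mpr hfM).image hf hRS ?_
    rw [Finset.coe_image]
    exact (hfS.mono_left hMS).image_subset
  rw [Finset.card_union_of_disjoint (Finset.disjoint_union_left.mpr ⟨hM, hfRfM⟩),
    Finset.card_union_of_disjoint hR, Finset.card_image_of_injOn (hf.mono hRS),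
    Finset.card_image_of_injOn ((hf.comp hf hfS).mono hMS)]
  ring

open SimpleGraph in
theorem statement_3_general {V : Type*} [Fintype V] [DecidableEq V]
    (G : SimpleGraph V) [DecidableRel G.Adj]
    {v : V} (C : G.Walk v v) (hC : IsLongestCycle C) (hD3 : IsD3Cycle C)
    (x₁ x₂ : V) (hadj : G.Adj x₁ x₂) (hx₁ : x₁ ∉ C.support) (hx₂ : x₂ ∉ C.support)
    (R M Y : Finset V)
    (hR : R = cycleNbhd C x₁ ∪ cycleNbhd C x₂)
    (hM : M = cycleNbhd C x₁ ∩ cycleNbhd C x₂)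
    (hY : Y = R ∪ R.image (cycleSucc C) ∪ M.image (cycleSucc C ∘ cycleSucc C)) :
    2 * G.degree x₁ + 2 * G.degree x₂ ≤ Y.card + M.card + 4 ∧
      4 * G.minDegree ≤ 2 * G.degree x₁ + 2 * G.degree x₂ := by
  have hYcard : Y.card = 2 * R.card + M.card := by
    subst hR hM hY
    refine Finset.card_union_image_union_image_comp (cycleSucc_injOn hC.1)
      (cycleSucc_mapsTo hC.1) ?_ Finset.inter_subset_union
      (hC.disjoint_image_cycleSucc hadj hx₁ hx₂) (hC.disjoint_image_cycleSucc_comp hadj hx₁ hx₂)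
    intro w hw
    simp only [Finset.coe_union, Set.mem_union, Finset.mem_coe, mem_cycleNbhd] at hw
    exact hw.elim (·.2) (·.2)
  have hRM : R.card + M.card = (cycleNbhd C x₁).card + (cycleNbhd C x₂).card := by
    rw [hR, hM, Finset.card_union_add_card_inter]
  have hd₁ := hD3.degree_le_card_cycleNbhd_add_one hadj hx₁ hx₂
  have hd₂ := hD3.degree_le_card_cycleNbhd_add_one hadj.symm hx₂ hx₁
  have hδ₁ := G.minDegree_le_degree x₁
  have hδ₂ := G.minDegree_le_degree x₂
  constructor <;> omega

open SimpleGraph in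
/-- **Lemma 1.** `|Y| ≥ 2d(x₁) + 2d(x₂) - |M| - 4 ≥ 4δ - |M| - 4`. -/
theorem statement_3 {V : Type*} [Fintype V] [DecidableEq V]
    (G : SimpleGraph V) [DecidableRel G.Adj]
    (h4 : 4 ≤ G.vertexConnectivity)
    {v : V} (C : G.Walk v v) (hC : IsLongestCycle C) (hD3 : IsD3Cycle C)
    (x₁ x₂ : V) (hadj : G.Adj x₁ x₂) (hx₁ : x₁ ∉ C.support) (hx₂ : x₂ ∉ C.support)
    (R M Y : Finset V)
    (hR : R = cycleNbhd C x₁ ∪ cycleNbhd C x₂)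
    (hM : M = cycleNbhd C x₁ ∩ cycleNbhd C x₂)
    (hY : Y = R ∪ R.image (cycleSucc C) ∪ M.image (cycleSucc C ∘ cycleSucc C)) :
    2 * G.degree x₁ + 2 * G.degree x₂ ≤ Y.card + M.card + 4 ∧
      4 * G.minDegree ≤ 2 * G.degree x₁ + 2 * G.degree x₂ :=
  statement_3_general G C hC hD3 x₁ x₂ hadj hx₁ hx₂ R M Y hR hM hY
end

section
/- Let G be a 4-connected finite simple graph with minimum degree δ, connectivity κ, and circumference c, in which every longest cycle is a D₃-cycle, and let S be a minimum cut-set of G. Then either c ≥ 4δ − κ − 3, or there exists a longest cycle C in G such that for every edge x₁x₂ of G∖C one has {x₁, x₂} ∩ S = ∅. -/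
/-!
Choose a longest cycle `C` meeting `S` as often as possible, and let `xy` be an edge off `C`
with `x ∈ S`. As `C` is a `D₃`-cycle, every neighbour of `x` other than `y` lies on `C`, so
`A = N(x) ∩ V(C)` and likewise `B = N(y) ∩ V(C)` have at least `δ - 1` elements. Write `σ` for
the successor on `C`. Rerouting `C` through `x` or through `xy` shows that `σ` maps `A ∪ B`
outside `A ∪ B` and that `σ²A ∩ B = σ²B ∩ A = ∅`, since `C` is longest; and that `σa ∈ S`
whenever `a, σ²a ∈ A`, and `σ²a ∈ S` whenever `a ∈ A`, `σ³a ∈ B`, `σa ∉ S`, since no longest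
cycle meets `S` more often. Counting along `C` then gives `2(|A| + |B|) ≤ |C| + |V(C) ∩ S|`, and
`|V(C) ∩ S| ≤ κ - 1` because `x ∈ S \ V(C)`. If `δ ≤ 1` the inequality holds trivially, and
otherwise `G` has a cycle.
-/

lemma exists_max_image_of_bddAbove {α : Type*} {P : α → Prop} (f : α → ℕ) (hP : ∃ a, P a)
    (hf : BddAbove (f '' {a | P a})) : ∃ a, P a ∧ ∀ b, P b → f b ≤ f a := by
  obtain ⟨_, ⟨a, ha, rfl⟩, hmax⟩ :=
    hf.exists_isGreatest_of_nonempty (hP.elim fun a ha => ⟨f a, a, ha, rfl⟩)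
  exact ⟨a, ha, fun b hb => hmax ⟨b, hb, rfl⟩⟩

namespace Equiv.Perm

variable {α : Type*} [DecidableEq α] (σ : Equiv.Perm α) {L A B K : Finset α}

lemma disjoint_union_image_union_image (hAB : ∀ z ∈ A ∪ B, σ z ∉ A ∪ B)
    (hAB₂ : ∀ a ∈ A, σ (σ a) ∉ B) (hBA₂ : ∀ b ∈ B, σ (σ b) ∉ A)
    (hA₂ : ∀ a ∈ A, σ (σ a) ∈ A → σ a ∈ K) :
    _root_.Disjoint ((A ∪ B) ∪ (A ∪ B).image σ)
      ((A ∩ B).image σ.symm ∪ ((A ∩ B).filter (σ · ∉ K)).image (fun t => σ (σ t))) := by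
  refine Finset.disjoint_left.2 fun z hz hz' => ?_
  have hzU : z ∈ A ∪ B ∨ ∃ u ∈ A ∪ B, σ u = z :=
    (Finset.mem_union.1 hz).imp_right Finset.mem_image.1
  rcases Finset.mem_union.1 hz' with hzP | hzQ
  · have hσz : σ z ∈ A ∧ σ z ∈ B := by simpa [Equiv.symm_apply_eq] using hzP
    rcases hzU with hzU | ⟨u, hu, rfl⟩
    · exact hAB z hzU (Finset.mem_union_left _ hσz.1)
    · rcases Finset.mem_union.1 hu with hu | hu
      exacts [hAB₂ u hu hσz.2, hBA₂ u hu hσz.1]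
  · obtain ⟨t, ⟨⟨htA, -⟩, htK⟩, rfl⟩ := by simpa using hzQ
    rcases hzU with hzU | ⟨u, hu, hut⟩
    · rcases Finset.mem_union.1 hzU with h | h
      exacts [htK (hA₂ t htA h), hAB₂ t htA h]
    · rw [σ.injective hut] at hu
      exact hAB t (Finset.mem_union_left _ htA) hu

lemma card_filter_add_card_inter_le (hAB : ∀ z ∈ A ∪ B, σ z ∉ A ∪ B)
    (hB₃ : ∀ a ∈ A, σ (σ (σ a)) ∈ B → σ a ∉ K → σ (σ a) ∈ K) :
    ((A ∩ B).filter (σ · ∈ K)).card + ((A ∩ B).image σ.symm ∩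
      ((A ∩ B).filter (σ · ∉ K)).image (fun t => σ (σ t))).card ≤ K.card := by
  set T₁ := (A ∩ B).filter (σ · ∈ K)
  set R := (A ∩ B).image σ.symm ∩ ((A ∩ B).filter (σ · ∉ K)).image (fun t => σ (σ t))
  have hR : ∀ z ∈ R, ∃ t ∈ A, σ t ∉ K ∧ σ (σ (σ t)) ∈ B ∧ z = σ (σ t) := fun z hz => by
    obtain ⟨⟨-, hB⟩, t, ⟨⟨htA, -⟩, htK⟩, rfl⟩ := by simpa [R, Equiv.symm_apply_eq] using hz
    exact ⟨t, htA, htK, hB, rfl⟩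
  have hdisj : _root_.Disjoint (T₁.image σ) R := by
    refine Finset.disjoint_left.2 fun z hz hz' => ?_
    obtain ⟨s, hs, rfl⟩ := Finset.mem_image.1 hz
    obtain ⟨t, htA, -, -, hst⟩ := hR _ hz'
    have hsA : s ∈ A := (Finset.mem_inter.1 (Finset.mem_filter.1 hs).1).1
    rw [σ.injective hst] at hsA
    exact hAB t (Finset.mem_union_left _ htA) (Finset.mem_union_left _ hsA)
  have hsub : T₁.image σ ∪ R ⊆ K := by
    refine Finset.union_subset (fun z hz => ?_) (fun z hz => ?_)
    · obtain ⟨s, hs, rfl⟩ := Finset.mem_image.1 hz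
      exact (Finset.mem_filter.1 hs).2
    · obtain ⟨t, htA, htK, htB, rfl⟩ := hR z hz
      exact hB₃ t htA htB htK
  rw [← Finset.card_image_of_injective T₁ σ.injective, ← Finset.card_union_of_disjoint hdisj]
  exact Finset.card_le_card hsub

/- `A ∪ B`, `σ (A ∪ B)` and `σ⁻¹ (A ∩ B) ∪ σ² T₂` are disjoint in `L`, where
`T₂ = {t ∈ A ∩ B | σ t ∉ K}`; the overlap `σ⁻¹ (A ∩ B) ∩ σ² T₂` is disjoint from
`σ (A ∩ B \ T₂)`, and both lie in `K`. -/
theorem two_mul_card_add_card_le (hL : ∀ z, σ z ∈ L ↔ z ∈ L) (hA : A ⊆ L) (hB : B ⊆ L)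
    (hAB : ∀ z ∈ A ∪ B, σ z ∉ A ∪ B)
    (hAB₂ : ∀ a ∈ A, σ (σ a) ∉ B) (hBA₂ : ∀ b ∈ B, σ (σ b) ∉ A)
    (hA₂ : ∀ a ∈ A, σ (σ a) ∈ A → σ a ∈ K)
    (hB₃ : ∀ a ∈ A, σ (σ (σ a)) ∈ B → σ a ∉ K → σ (σ a) ∈ K) :
    2 * (A.card + B.card) ≤ L.card + K.card := by
  set U := A ∪ B
  set T := A ∩ B
  set T₁ := T.filter (σ · ∈ K)
  set T₂ := T.filter (σ · ∉ K)
  set P := T.image σ.symm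
  set Q := T₂.image (fun t => σ (σ t))
  have hP : ∀ z, z ∈ P ↔ σ z ∈ A ∧ σ z ∈ B := fun z => by simp [P, T, Equiv.symm_apply_eq]
  have hQ : ∀ z ∈ Q, ∃ t ∈ A, z = σ (σ t) := fun z hz => by
    obtain ⟨t, ⟨⟨htA, -⟩, -⟩, rfl⟩ := by simpa [Q, T₂, T] using hz
    exact ⟨t, htA, rfl⟩
  have hU : _root_.Disjoint U (U.image σ) := by
    refine Finset.disjoint_left.2 fun z hz hz' => ?_
    obtain ⟨u, hu, rfl⟩ := Finset.mem_image.1 hz'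
    exact hAB u hu hz
  have hPQ : _root_.Disjoint (U ∪ U.image σ) (P ∪ Q) :=
    σ.disjoint_union_image_union_image hAB hAB₂ hBA₂ hA₂
  have hLU : U ∪ U.image σ ∪ (P ∪ Q) ⊆ L := by
    have hUL : U ⊆ L := Finset.union_subset hA hB
    refine Finset.union_subset (Finset.union_subset hUL fun z hz => ?_)
      (Finset.union_subset (fun z hz => ?_) fun z hz => ?_)
    · obtain ⟨u, hu, rfl⟩ := Finset.mem_image.1 hz
      exact (hL u).2 (hUL hu)
    · exact (hL z).1 (hA ((hP z).1 hz).1)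
    · obtain ⟨t, htA, rfl⟩ := hQ z hz
      exact (hL _).2 ((hL t).2 (hA htA))
  have cU : (U.image σ).card = U.card := Finset.card_image_of_injective _ σ.injective
  have cP : P.card = T.card := Finset.card_image_of_injective _ σ.symm.injective
  have cQ : Q.card = T₂.card := Finset.card_image_of_injective _ (σ.injective.comp σ.injective)
  have cT : T₁.card + T₂.card = T.card := Finset.card_filter_add_card_filter_not _
  have cAB : U.card + T.card = A.card + B.card := Finset.card_union_add_card_inter A B
  have cPQ : (P ∪ Q).card + (P ∩ Q).card = P.card + Q.card :=
    Finset.card_union_add_card_inter P Q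
  have cL := Finset.card_le_card hLU
  have cK : T₁.card + (P ∩ Q).card ≤ K.card := σ.card_filter_add_card_inter_le hAB hB₃
  rw [Finset.card_union_of_disjoint hPQ, Finset.card_union_of_disjoint hU] at cL
  omega

end Equiv.Perm

namespace SimpleGraph

variable {V : Type*} {G : SimpleGraph V}

namespace Walk

lemma isCycle_of_support_tail_nodup {u : V} (c : G.Walk u u) (h3 : 3 ≤ c.length)
    (hc : c.support.tail.Nodup) : c.IsCycle := by
  refine isCycle_iff_isPath_tail_and_le_length.2 ⟨IsPath.mk' ?_, h3⟩
  rwa [support_tail_of_not_nil _ (not_nil_iff_lt_length.2 (by omega))]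

lemma IsCycle.mem_support_tail_iff {u w : V} {c : G.Walk u u} (hc : c.IsCycle) :
    w ∈ c.support.tail ↔ w ∈ c.support := by
  rw [mem_support_iff]
  refine ⟨Or.inr, ?_⟩
  rintro (rfl | h)
  exacts [end_mem_tail_support hc.not_nil, h]

lemma support_drop_eq_cons {u v : V} (p : G.Walk u v) {n : ℕ} (hn : n ≤ p.length) :
    p.support.drop n = p.getVert n :: p.support.drop (n + 1) := by
  rw [List.drop_eq_getElem_cons (by simp; omega), getVert_eq_support_getElem _ hn]

lemma support_drop_sublist_support_tail {u v : V} (p : G.Walk u v) {k : ℕ} (hk : 1 ≤ k) :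
    (p.support.drop k).Sublist p.support.tail := by
  obtain ⟨k, rfl⟩ := Nat.exists_eq_add_of_le' hk
  rw [← List.drop_tail]
  exact List.drop_sublist _ _

-- `d` replaces the arc `u, c₁, …, c_k` of `c` by `u, x, c_k` (resp. `u, x, y, c_k`).
lemma IsCycle.exists_detour₁ {u : V} {c : G.Walk u u} (hc : c.IsCycle) {k : ℕ} (hk : 1 ≤ k)
    (hkc : k < c.length) {x : V} (hx : x ∉ c.support.tail) (h₁ : G.Adj u x)
    (h₂ : G.Adj x (c.getVert k)) :
    ∃ d : G.Walk u u, d.IsCycle ∧ d.length + k = c.length + 2 ∧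
      d.support.tail = x :: c.support.drop k := by
  have hsupp : (cons h₁ (cons h₂ (c.drop k))).support.tail = x :: c.support.drop k := by
    simp [Nat.min_eq_left hkc.le]
  refine ⟨_, isCycle_of_support_tail_nodup _ (by simp; omega) ?_, by simp; omega, hsupp⟩
  have hsub := c.support_drop_sublist_support_tail hk
  rw [hsupp]
  exact List.nodup_cons.2 ⟨fun h => hx (hsub.subset h), hsub.nodup hc.support_nodup⟩

lemma IsCycle.exists_detour₂ {u : V} {c : G.Walk u u} (hc : c.IsCycle) {k : ℕ} (hk : 1 ≤ k)
    (hkc : k ≤ c.length) {x y : V} (hx : x ∉ c.support.tail) (hy : y ∉ c.support.tail)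
    (h₁ : G.Adj u x) (hxy : G.Adj x y) (h₂ : G.Adj y (c.getVert k)) :
    ∃ d : G.Walk u u, d.IsCycle ∧ d.length + k = c.length + 3 ∧
      d.support.tail = x :: y :: c.support.drop k := by
  have hsupp : (cons h₁ (cons hxy (cons h₂ (c.drop k)))).support.tail =
      x :: y :: c.support.drop k := by
    simp [Nat.min_eq_left hkc]
  refine ⟨_, isCycle_of_support_tail_nodup _ (by simp) ?_, by simp; omega, hsupp⟩
  have hsub := c.support_drop_sublist_support_tail hk
  rw [hsupp, List.nodup_cons, List.nodup_cons, List.mem_cons]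
  exact ⟨not_or.2 ⟨hxy.ne, fun h => hx (hsub.subset h)⟩, fun h => hy (hsub.subset h),
    hsub.nodup hc.support_nodup⟩

lemma IsCycle.length_le_card [Fintype V] {u : V} {c : G.Walk u u} (hc : c.IsCycle) :
    c.length ≤ Fintype.card V := by
  simpa using hc.support_nodup.length_le_card

variable [DecidableEq V]

/-- The successor map `x ↦ x⁺` along a cycle, in the permutation form of `cycleSucc`. -/
abbrev cyclePerm {u : V} (c : G.Walk u u) : Equiv.Perm V := c.support.tail.formPerm

lemma IsCycle.cyclePerm_pow_apply_start {u : V} {c : G.Walk u u} (hc : c.IsCycle) {k : ℕ}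
    (hk : k ≤ c.length) : (c.cyclePerm ^ k) u = c.getVert k := by
  rcases Nat.eq_zero_or_pos k with rfl | hk0
  · simp
  have hlen : c.support.tail.length = c.length := by simp
  have hn : 0 < c.length := by omega
  have hu : u = c.support.tail[c.length - 1] := by
    rw [List.getElem_tail, support_getElem_eq_getVert]
    simp [Nat.sub_add_cancel hn]
  rw [show (c.cyclePerm ^ k) u = (c.cyclePerm ^ k) c.support.tail[c.length - 1] from
    congrArg _ hu, cyclePerm, List.formPerm_pow_apply_getElem _ hc.support_nodup, List.getElem_tail,
    support_getElem_eq_getVert]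
  congr 1
  rw [hlen, show c.length - 1 + k = k - 1 + c.length by omega, Nat.add_mod_right,
    Nat.mod_eq_of_lt (by omega)]
  omega

lemma IsCycle.cyclePerm_rotate {u v : V} {c : G.Walk v v} (hc : c.IsCycle) (h : u ∈ c.support) :
    (c.rotate u h).cyclePerm = c.cyclePerm :=
  List.formPerm_eq_of_isRotated (hc.rotate h).support_nodup (support_rotate c u h)

lemma IsCycle.exists_rotation {v : V} {c : G.Walk v v} (hc : c.IsCycle) {a : V}
    (ha : a ∈ c.support) :
    ∃ c' : G.Walk a a, c'.IsCycle ∧ c'.length = c.length ∧ c'.support.tail.Perm c.support.tail ∧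
      ∀ k ≤ c.length, (c.cyclePerm ^ k) a = c'.getVert k :=
  ⟨c.rotate a ha, hc.rotate ha, length_rotate .., (support_rotate ..).perm, fun k hk => by
    rw [← hc.cyclePerm_rotate ha]
    exact (hc.rotate ha).cyclePerm_pow_apply_start (by simpa)⟩

lemma IsCycle.card_support_toFinset {u : V} {c : G.Walk u u} (hc : c.IsCycle) :
    c.support.toFinset.card = c.length := by
  have : c.support.toFinset = c.support.tail.toFinset := by
    ext z
    simp [hc.mem_support_tail_iff]
  rw [this, List.toFinset_card_of_nodup hc.support_nodup]
  simp

end Walk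

open Walk

lemma exists_isCycle_of_two_le_minDegree [Fintype V] [DecidableRel G.Adj]
    (h : 2 ≤ G.minDegree) : ∃ (v : V) (c : G.Walk v v), c.IsCycle := by
  have : Nonempty V := by
    by_contra hV
    rw [not_nonempty_iff] at hV
    simp at h
  by_contra hno
  have hG : G.IsAcyclic := fun v c hc => hno ⟨v, c, hc⟩
  obtain ⟨u, w, p, hp, hmax⟩ := Walk.exists_isPath_forall_isPath_length_le_length G
  have hu : 1 < (G.neighborFinset u).card := by
    have := G.minDegree_le_degree u
    rw [card_neighborFinset_eq_degree]
    omega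
  obtain ⟨z, hz, hzp⟩ := Finset.exists_mem_ne hu p.snd
  rw [mem_neighborFinset] at hz
  by_cases hzs : z ∈ p.support
  · exact hzp (hG.eq_snd_of_adj_start hp hz hzs)
  · have := hmax _ _ _ (hp.cons hzs (h := hz.symm))
    simp at this

lemma IsLongestCycle.length_eq_circumference {v : V} {c : G.Walk v v} (hc : IsLongestCycle c) :
    c.length = G.circumference := by
  have hbdd : ∀ n ∈ {n | ∃ (w : V) (d : G.Walk w w), d.IsCycle ∧ d.length = n}, n ≤ c.length := by
    rintro _ ⟨w, d, hd, rfl⟩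
    exact hc.2 w d hd
  exact le_antisymm (le_csSup ⟨_, hbdd⟩ ⟨v, c, hc.1, rfl⟩) (csSup_le ⟨_, v, c, hc.1, rfl⟩ hbdd)

lemma IsD3Cycle.mem_support_of_adj {v x y : V} {c : G.Walk v v} (hc : IsD3Cycle c)
    (hxy : G.Adj x y) (hx : x ∉ c.support) (hy : y ∉ c.support) {z : V} (hxz : G.Adj x z)
    (hzy : z ≠ y) : z ∈ c.support := by
  have hP : (cons hxz.symm (cons hxy nil)).IsPath := by
    simp [hxz.ne', hzy, hxy.ne]
  obtain ⟨w, hwP, hwc⟩ := hc.2 z y _ hP (by simp)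
  simp only [support_cons, support_nil, List.mem_cons, List.not_mem_nil, or_false] at hwP
  rcases hwP with rfl | rfl | rfl
  exacts [hwc, absurd hwc hx, absurd hwc hy]

variable [DecidableEq V]

def IsLongestCycleMeetingMost (S : Finset V) {v : V} (c : G.Walk v v) : Prop :=
  IsLongestCycle c ∧ ∀ (w : V) (d : G.Walk w w), IsLongestCycle d →
    d.support.tail.countP (· ∈ S) ≤ c.support.tail.countP (· ∈ S)

lemma exists_isLongestCycleMeetingMost [Fintype V] (S : Finset V)
    (h : ∃ (v : V) (c : G.Walk v v), c.IsCycle) :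
    ∃ (v : V) (c : G.Walk v v), IsLongestCycleMeetingMost S c := by
  obtain ⟨⟨v, c⟩, hc, hmax⟩ := exists_max_image_of_bddAbove
    (P := fun p : Σ v, G.Walk v v => p.2.IsCycle) (fun p => p.2.length)
    (h.elim fun v ⟨c, hc⟩ => ⟨⟨v, c⟩, hc⟩)
    ⟨Fintype.card V, by rintro _ ⟨p, hp, rfl⟩; exact hp.length_le_card⟩
  obtain ⟨⟨w, d⟩, hd, hdmax⟩ := exists_max_image_of_bddAbove
    (P := fun p : Σ v, G.Walk v v => IsLongestCycle p.2)
    (fun p => p.2.support.tail.countP (· ∈ S))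
    ⟨⟨v, c⟩, hc, fun w D hD => hmax ⟨w, D⟩ hD⟩
    ⟨Fintype.card V, by
      rintro _ ⟨p, hp, rfl⟩
      exact (List.countP_le_length).trans (by simpa using hp.1.length_le_card)⟩
  exact ⟨w, d, hd, fun u D hD => hdmax ⟨u, D⟩ hD⟩

section Surgery

variable {v x y a : V} {c : G.Walk v v}

lemma IsLongestCycle.not_adj_cyclePerm (hc : IsLongestCycle c) (hx : x ∉ c.support.tail)
    (ha : a ∈ c.support) (hxa : G.Adj x a) : ¬ G.Adj x (c.cyclePerm a) := by
  obtain ⟨c', hc', hlen, hperm, hσ⟩ := hc.1.exists_rotation ha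
  have h3 := hc.1.three_le_length
  rw [show c.cyclePerm a = c'.getVert 1 by simpa using hσ 1 (by omega)]
  intro h
  obtain ⟨d, hd, hdlen, -⟩ :=
    hc'.exists_detour₁ le_rfl (by omega) (hperm.mem_iff.not.2 hx) hxa.symm h
  have := hc.2 _ d hd
  omega

lemma IsLongestCycle.not_adj_cyclePerm_of_adj (hc : IsLongestCycle c) (hx : x ∉ c.support.tail)
    (hy : y ∉ c.support.tail) (hxy : G.Adj x y) (ha : a ∈ c.support) (hxa : G.Adj x a) :
    ¬ G.Adj y (c.cyclePerm a) := by
  obtain ⟨c', hc', hlen, hperm, hσ⟩ := hc.1.exists_rotation ha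
  have h3 := hc.1.three_le_length
  rw [show c.cyclePerm a = c'.getVert 1 by simpa using hσ 1 (by omega)]
  intro h
  obtain ⟨d, hd, hdlen, -⟩ := hc'.exists_detour₂ le_rfl (by omega) (hperm.mem_iff.not.2 hx)
    (hperm.mem_iff.not.2 hy) hxa.symm hxy h
  have := hc.2 _ d hd
  omega

lemma IsLongestCycle.not_adj_cyclePerm_cyclePerm (hc : IsLongestCycle c)
    (hx : x ∉ c.support.tail) (hy : y ∉ c.support.tail) (hxy : G.Adj x y) (ha : a ∈ c.support)
    (hxa : G.Adj x a) : ¬ G.Adj y (c.cyclePerm (c.cyclePerm a)) := by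
  obtain ⟨c', hc', hlen, hperm, hσ⟩ := hc.1.exists_rotation ha
  have h3 := hc.1.three_le_length
  rw [show c.cyclePerm (c.cyclePerm a) = c'.getVert 2 by
    simpa [pow_two] using hσ 2 (by omega)]
  intro h
  obtain ⟨d, hd, hdlen, -⟩ := hc'.exists_detour₂ (by omega) (by omega)
    (hperm.mem_iff.not.2 hx) (hperm.mem_iff.not.2 hy) hxa.symm hxy h
  have := hc.2 _ d hd
  omega

lemma IsLongestCycleMeetingMost.cyclePerm_mem {S : Finset V} (hc : IsLongestCycleMeetingMost S c)
    (hx : x ∉ c.support.tail) (hxS : x ∈ S) (ha : a ∈ c.support) (hxa : G.Adj x a)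
    (h : G.Adj x (c.cyclePerm (c.cyclePerm a))) : c.cyclePerm a ∈ S := by
  obtain ⟨c', hc', hlen, hperm, hσ⟩ := hc.1.1.exists_rotation ha
  have h3 := hc.1.1.three_le_length
  rw [show c.cyclePerm (c.cyclePerm a) = c'.getVert 2 by
    simpa [pow_two] using hσ 2 (by omega)] at h
  rw [show c.cyclePerm a = c'.getVert 1 by simpa using hσ 1 (by omega)]
  obtain ⟨d, hd, hdlen, hdsupp⟩ :=
    hc'.exists_detour₁ (by omega) (by omega) (hperm.mem_iff.not.2 hx) hxa.symm h
  have hcount := hc.2 _ d ⟨hd, fun w D hD => by have := hc.1.2 w D hD; omega⟩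
  rw [← hperm.countP_eq, hdsupp, ← List.drop_one,
    c'.support_drop_eq_cons (n := 1) (by omega)] at hcount
  by_contra h1
  simp [hxS, h1] at hcount

lemma IsLongestCycleMeetingMost.cyclePerm_cyclePerm_mem {S : Finset V}
    (hc : IsLongestCycleMeetingMost S c) (hx : x ∉ c.support.tail) (hy : y ∉ c.support.tail)
    (hxy : G.Adj x y) (hxS : x ∈ S) (ha : a ∈ c.support) (hxa : G.Adj x a)
    (h : G.Adj y (c.cyclePerm (c.cyclePerm (c.cyclePerm a)))) (haS : c.cyclePerm a ∉ S) :
    c.cyclePerm (c.cyclePerm a) ∈ S := by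
  obtain ⟨c', hc', hlen, hperm, hσ⟩ := hc.1.1.exists_rotation ha
  have h3 := hc.1.1.three_le_length
  rw [show c.cyclePerm (c.cyclePerm (c.cyclePerm a)) = c'.getVert 3 by
    simpa [pow_succ] using hσ 3 (by omega)] at h
  rw [show c.cyclePerm a = c'.getVert 1 by simpa using hσ 1 (by omega)] at haS
  rw [show c.cyclePerm (c.cyclePerm a) = c'.getVert 2 by
    simpa [pow_two] using hσ 2 (by omega)]
  obtain ⟨d, hd, hdlen, hdsupp⟩ := hc'.exists_detour₂ (by omega) (by omega)
    (hperm.mem_iff.not.2 hx) (hperm.mem_iff.not.2 hy) hxa.symm hxy h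
  have hcount := hc.2 _ d ⟨hd, fun w D hD => by have := hc.1.2 w D hD; omega⟩
  rw [← hperm.countP_eq, hdsupp, ← List.drop_one, c'.support_drop_eq_cons (n := 1) (by omega),
    c'.support_drop_eq_cons (n := 2) (by omega)] at hcount
  by_contra h2
  simp [hxS, haS, h2] at hcount
  rw [List.countP_cons] at hcount
  split_ifs at hcount <;> omega

end Surgery

section Counting

variable [Fintype V] [DecidableRel G.Adj] {v x y : V} {c : G.Walk v v}

lemma mem_cycleNbhd_s6 {z : V} : z ∈ cycleNbhd c x ↔ G.Adj x z ∧ z ∈ c.support := by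
  simp [cycleNbhd]

lemma IsD3Cycle.minDegree_le_card_cycleNbhd_add_one (hc : IsD3Cycle c) (hxy : G.Adj x y)
    (hx : x ∉ c.support) (hy : y ∉ c.support) : G.minDegree ≤ (cycleNbhd c x).card + 1 := by
  have hsub : G.neighborFinset x ⊆ insert y (cycleNbhd c x) := fun z hz => by
    rw [mem_neighborFinset] at hz
    rw [Finset.mem_insert, mem_cycleNbhd_s6]
    by_cases hzy : z = y
    exacts [Or.inl hzy, Or.inr ⟨hz, hc.mem_support_of_adj hxy hx hy hz hzy⟩]
  calc G.minDegree ≤ G.degree x := G.minDegree_le_degree x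
    _ ≤ (insert y (cycleNbhd c x)).card := Finset.card_le_card hsub
    _ ≤ (cycleNbhd c x).card + 1 := Finset.card_insert_le _ _

lemma IsLongestCycle.cyclePerm_not_mem_union_cycleNbhd (hc : IsLongestCycle c) (hxy : G.Adj x y)
    (hx : x ∉ c.support.tail) (hy : y ∉ c.support.tail) :
    ∀ z ∈ cycleNbhd c x ∪ cycleNbhd c y, c.cyclePerm z ∉ cycleNbhd c x ∪ cycleNbhd c y := by
  intro z hz
  simp only [Finset.mem_union, mem_cycleNbhd_s6] at hz ⊢
  rcases hz with ⟨hxz, hz⟩ | ⟨hyz, hz⟩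
  · exact not_or.2 ⟨fun h => hc.not_adj_cyclePerm hx hz hxz h.1,
      fun h => hc.not_adj_cyclePerm_of_adj hx hy hxy hz hxz h.1⟩
  · exact not_or.2 ⟨fun h => hc.not_adj_cyclePerm_of_adj hy hx hxy.symm hz hyz h.1,
      fun h => hc.not_adj_cyclePerm hy hz hyz h.1⟩

theorem IsLongestCycleMeetingMost.four_mul_minDegree_le {S : Finset V}
    (hc : IsLongestCycleMeetingMost S c) (hD3 : IsD3Cycle c) (hxy : G.Adj x y)
    (hx : x ∉ c.support) (hy : y ∉ c.support) (hxS : x ∈ S) :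
    4 * G.minDegree ≤ c.length + S.card + 3 := by
  have hC := hc.1.1
  have hx' : x ∉ c.support.tail := fun h => hx (List.mem_of_mem_tail h)
  have hy' : y ∉ c.support.tail := fun h => hy (List.mem_of_mem_tail h)
  set σ := c.cyclePerm
  set L := c.support.toFinset
  have hL : ∀ z, σ z ∈ L ↔ z ∈ L := fun z => by
    simp only [L, List.mem_toFinset, ← hC.mem_support_tail_iff]
    exact List.formPerm_mem_iff_mem
  have hAL : ∀ {a}, a ∈ cycleNbhd c x → a ∈ L := fun ha => Finset.inter_subset_right ha
  have key : 2 * ((cycleNbhd c x).card + (cycleNbhd c y).card) ≤ L.card + (L ∩ S).card :=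
    σ.two_mul_card_add_card_le hL Finset.inter_subset_right Finset.inter_subset_right
    (hc.1.cyclePerm_not_mem_union_cycleNbhd hxy hx' hy')
    (fun a ha h => hc.1.not_adj_cyclePerm_cyclePerm hx' hy' hxy (mem_cycleNbhd_s6.1 ha).2
      (mem_cycleNbhd_s6.1 ha).1 (mem_cycleNbhd_s6.1 h).1)
    (fun b hb h => hc.1.not_adj_cyclePerm_cyclePerm hy' hx' hxy.symm (mem_cycleNbhd_s6.1 hb).2
      (mem_cycleNbhd_s6.1 hb).1 (mem_cycleNbhd_s6.1 h).1)
    (fun a ha h => Finset.mem_inter.2 ⟨(hL a).2 (hAL ha), hc.cyclePerm_mem hx' hxS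
      (mem_cycleNbhd_s6.1 ha).2 (mem_cycleNbhd_s6.1 ha).1 (mem_cycleNbhd_s6.1 h).1⟩)
    (fun a ha h hK => Finset.mem_inter.2 ⟨(hL _).2 ((hL a).2 (hAL ha)),
      hc.cyclePerm_cyclePerm_mem hx' hy' hxy hxS (mem_cycleNbhd_s6.1 ha).2 (mem_cycleNbhd_s6.1 ha).1
        (mem_cycleNbhd_s6.1 h).1 fun h' => hK (Finset.mem_inter.2 ⟨(hL a).2 (hAL ha), h'⟩)⟩)
  have hK : (L ∩ S).card + 1 ≤ S.card := by
    rw [← Finset.card_insert_of_notMem (fun h => hx (List.mem_toFinset.1 (Finset.mem_inter.1 h).1))]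
    exact Finset.card_le_card (Finset.insert_subset hxS Finset.inter_subset_right)
  have hA := hD3.minDegree_le_card_cycleNbhd_add_one hxy hx hy
  have hB := hD3.minDegree_le_card_cycleNbhd_add_one hxy.symm hy hx
  rw [hC.card_support_toFinset] at key
  omega

end Counting

end SimpleGraph

open SimpleGraph in
/-- **Lemma 3.** Let `S` be a minimum cut-set of `G`. Then either `c ≥ 4δ - κ - 3` or
there is a longest cycle `C` with `{x₁, x₂} ∩ S = ∅` for each edge `x₁x₂` of `G \ C`. -/
theorem statement_6 {V : Type*} [Fintype V] [DecidableEq V]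
    (G : SimpleGraph V) [DecidableRel G.Adj]
    (h4 : 4 ≤ G.vertexConnectivity)
    (hD3 : ∀ (v : V) (C : G.Walk v v), IsLongestCycle C → IsD3Cycle C)
    (S : Finset V) (hS : G.IsMinCutSet S) :
    4 * G.minDegree ≤ G.circumference + G.vertexConnectivity + 3 ∨
      ∃ (v : V) (C : G.Walk v v), IsLongestCycle C ∧
        ∀ x₁ x₂ : V, G.Adj x₁ x₂ → x₁ ∉ C.support → x₂ ∉ C.support →
          x₁ ∉ S ∧ x₂ ∉ S := by
  rcases Nat.lt_or_ge G.minDegree 2 with hδ | hδ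
  · left
    omega
  obtain ⟨v, C, hC⟩ := exists_isLongestCycleMeetingMost S (exists_isCycle_of_two_le_minDegree hδ)
  refine or_iff_not_imp_right.2 fun hbad => ?_
  push Not at hbad
  obtain ⟨x₁, x₂, h₁₂, hx₁, hx₂, hS₁₂⟩ := hbad v C hC.1
  rw [← hC.1.length_eq_circumference, ← hS.2]
  by_cases hx₁S : x₁ ∈ S
  · exact hC.four_mul_minDegree_le (hD3 v C hC.1) h₁₂ hx₁ hx₂ hx₁S
  · exact hC.four_mul_minDegree_le (hD3 v C hC.1) h₁₂.symm hx₂ hx₁ (hS₁₂ hx₁S)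
end
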